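/- arXiv:2111.01986 — 5 statements merged into one kernel-verified Lean document; each statement's English description precedes it below -/
import Mathlib

section
/- Let S be a right denominator set in a ring R and let Q = RS⁻¹ be the right Ore localization of R at S, viewed as a left R-module via the canonical map R → Q. Let φ be a unary pp formula for left R-modules. (1) If φ(R) = 0 (R viewed as a left module over itself), then φ(Q) = 0. (2) If moreover every element of S is regular (neither a left nor a right zero divisor), then φ(R) = 0 if and only if φ(Q) = 0. -/
/-- A unary pp formula `∃ y (A y ≐ b x)` for left `R`-modules, given by matching
matrices `A : Matrix (Fin n) (Fin m) R` and `b : Fin n → R`. -/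
structure PPFormula (R : Type*) [Ring R] where
  n : ℕ
  m : ℕ
  A : Matrix (Fin n) (Fin m) R
  b : Fin n → R

/-- Flatness of a left module over a possibly noncommutative ring, phrased via the
standard equational criterion: every solution in `M` of a homogeneous system of linear
equations is a linear combination of solutions in `R`.  (Over a commutative ring this
is equivalent to `Module.Flat`, which at present requires commutativity in Mathlib.) -/
def IsFlatModule (R : Type*) [Ring R] (M : Type*) [AddCommGroup M] [Module R M] : Prop :=
  ∀ (n k : ℕ) (B : Matrix (Fin n) (Fin k) R) (x : Fin k → M),
    (∀ i, ∑ j, B i j • x j = 0) →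
    ∃ (l : ℕ) (a : Matrix (Fin k) (Fin l) R) (y : Fin l → M),
      (∀ j, x j = ∑ p, a j p • y p) ∧ ∀ i p, (∑ j, B i j * a j p) = 0

namespace PPFormula

variable {R : Type*} [Ring R]

/-- The pp subgroup defined by `φ` in a left `R`-module `M`. -/
def eval (φ : PPFormula R) (M : Type*) [AddCommGroup M] [Module R M] : Set M :=
  {x : M | ∃ y : Fin φ.m → M, ∀ i, (∑ j, φ.A i j • y j) = φ.b i • x}

/-- `φ` is high if it defines everything in every injective left `R`-module. -/
def IsHigh (φ : PPFormula R) : Prop :=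
  ∀ (E : Type*) [AddCommGroup E] [Module R E], Module.Injective R E → φ.eval E = Set.univ

/-- `φ` is low if it defines `0` in every flat left `R`-module. -/
def IsLow (φ : PPFormula R) : Prop :=
  ∀ (F : Type*) [AddCommGroup F] [Module R F], IsFlatModule R F → φ.eval F = {0}

/-- `φ` is bounded if a single nonzero scalar annihilates `φ(M)` in every module `M`. -/
def IsBounded (φ : PPFormula R) : Prop :=
  ∃ r : R, r ≠ 0 ∧ ∀ (M : Type*) [AddCommGroup M] [Module R M], ∀ x ∈ φ.eval M, r • x = 0

/-- `φ` is cobounded if a single nonzero scalar sends every module into `φ`. -/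
def IsCobounded (φ : PPFormula R) : Prop :=
  ∃ s : R, s ≠ 0 ∧ ∀ (M : Type*) [AddCommGroup M] [Module R M], ∀ x : M, s • x ∈ φ.eval M

end PPFormula

/-- A left `R`-module `M` is absolutely pure if it is pure in every extension,
purity being tested on unary pp formulas. -/
def IsAbsolutelyPure (R : Type*) [Ring R] (M : Type*) [AddCommGroup M] [Module R M] : Prop :=
  ∀ (N : Type*) [AddCommGroup N] [Module R N] (f : M →ₗ[R] N), Function.Injective f →
    ∀ ψ : PPFormula R, f ⁻¹' ψ.eval N = ψ.eval M

/-!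
An element `x ∈ φ(Q)` together with its witnesses can be brought to a common right
denominator `s ∈ S`, so that `x * f s = f c` and the witnesses times `f s` come from `R`.
The pp equations then hold for the numerators in `Q`, hence in `R` after multiplying on the
right by a common annihilator `t ∈ S` of the finitely many defects; thus `c * t ∈ φ(R) = 0`,
and `f c = 0` because `f t` is a unit. Conversely `f` maps `φ(R)` into `φ(Q)`, and when `S`
consists of regular elements the kernel of `f` is zero.
-/

namespace PPFormula

variable {R : Type*} [Ring R]

theorem zero_mem_eval (φ : PPFormula R) (M : Type*) [AddCommGroup M] [Module R M] :
    (0 : M) ∈ φ.eval M :=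
  ⟨0, fun i => by simp⟩

theorem eval_eq_singleton_zero_iff (φ : PPFormula R) (M : Type*) [AddCommGroup M]
    [Module R M] : φ.eval M = {0} ↔ ∀ x ∈ φ.eval M, x = 0 := by
  rw [Set.eq_singleton_iff_unique_mem]
  exact and_iff_right (φ.zero_mem_eval M)

variable {Q : Type*} [Ring Q] (f : R →+* Q) (φ : PPFormula R)

theorem map_mem_eval {x : R} (hx : x ∈ φ.eval R) :
    letI : Module R Q := Module.compHom Q f
    f x ∈ φ.eval Q := by
  obtain ⟨y, hy⟩ := hx
  refine ⟨fun j => f (y j), fun i => ?_⟩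
  change ∑ j, f (φ.A i j) * f (y j) = f (φ.b i) * f x
  simpa only [smul_eq_mul, map_sum, map_mul] using congrArg f (hy i)

theorem mul_mem_eval {x : Q} (q : Q) :
    letI : Module R Q := Module.compHom Q f
    x ∈ φ.eval Q → x * q ∈ φ.eval Q := by
  let : Module R Q := Module.compHom Q f
  rintro ⟨y, hy⟩
  refine ⟨fun j => y j * q, fun i => ?_⟩
  change ∑ j, f (φ.A i j) * (y j * q) = f (φ.b i) * (x * q)
  simp only [← mul_assoc, ← Finset.sum_mul]
  exact congrArg (· * q) (hy i)

end PPFormula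

section OreLocalization

variable {R : Type*} [Ring R] (S : Submonoid R) {Q : Type*} [Ring Q] (f : R →+* Q)

theorem exists_forall_mul_eq_zero_of_forall_map_eq_zero
    (hker : ∀ r : R, f r = 0 ↔ ∃ s : S, r * (s : R) = 0) :
    ∀ {n : ℕ} (u : Fin n → R), (∀ i, f (u i) = 0) → ∃ s : S, ∀ i, u i * (s : R) = 0 := by
  intro n
  induction n with
  | zero => exact fun _ _ => ⟨1, fun i => i.elim0⟩
  | succ k ih =>
    intro u hu
    obtain ⟨s, hs⟩ := ih (fun i => u i.succ) (fun i => hu i.succ)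
    obtain ⟨t, ht⟩ := (hker (u 0 * s)).mp (by rw [map_mul, hu 0, zero_mul])
    refine ⟨s * t, Fin.cases ?_ fun j => ?_⟩
    · rw [Submonoid.coe_mul, ← mul_assoc, ht]
    · rw [Submonoid.coe_mul, ← mul_assoc, hs j, zero_mul]

theorem exists_common_denominator
    (oreCond : ∀ (r : R) (s : S), ∃ (r' : R) (s' : S), r * (s' : R) = (s : R) * r')
    (hfrac : ∀ q : Q, ∃ (r : R) (s : S), q * f s = f r) :
    ∀ {n : ℕ} (q : Fin n → Q), ∃ (c : Fin n → R) (s : S), ∀ i, q i * f s = f (c i) := by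
  intro n
  induction n with
  | zero => exact fun _ => ⟨Fin.elim0, 1, fun i => i.elim0⟩
  | succ k ih =>
    intro q
    obtain ⟨c, s, hc⟩ := ih (fun i => q i.succ)
    obtain ⟨r₀, s₀, h₀⟩ := hfrac (q 0)
    obtain ⟨r', s', hs'⟩ := oreCond s₀ s
    refine ⟨Fin.cons (r₀ * s') (fun j => c j * r'), s₀ * s', Fin.cases ?_ fun j => ?_⟩
    · rw [Fin.cons_zero, Submonoid.coe_mul, map_mul, ← mul_assoc, h₀, map_mul]
    · rw [Fin.cons_succ, Submonoid.coe_mul, hs', map_mul, ← mul_assoc, hc j, map_mul]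

theorem exists_mul_mem_eval_of_map_mem_eval
    (oreCond : ∀ (r : R) (s : S), ∃ (r' : R) (s' : S), r * (s' : R) = (s : R) * r')
    (hfrac : ∀ q : Q, ∃ (r : R) (s : S), q * f s = f r)
    (hker : ∀ r : R, f r = 0 ↔ ∃ s : S, r * (s : R) = 0) (φ : PPFormula R) {r : R} :
    letI : Module R Q := Module.compHom Q f
    f r ∈ φ.eval Q → ∃ s : S, r * s ∈ φ.eval R := by
  let : Module R Q := Module.compHom Q f
  rintro ⟨y, hy⟩
  obtain ⟨c, s, hc⟩ := exists_common_denominator S f oreCond hfrac y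
  have hdefect : ∀ i, f (∑ j, φ.A i j * c j - φ.b i * (r * s)) = 0 := fun i => by
    have hyi : (∑ j, f (φ.A i j) * y j) * f s = f (φ.b i) * f r * f s :=
      congrArg (· * f s) (hy i)
    simp only [Finset.sum_mul, mul_assoc] at hyi
    simp only [map_sub, map_sum, map_mul, ← hc, hyi, sub_self]
  obtain ⟨t, ht⟩ := exists_forall_mul_eq_zero_of_forall_map_eq_zero S f hker _ hdefect
  refine ⟨s * t, fun j => c j * t, fun i => ?_⟩
  have hti := ht i
  rw [sub_mul, sub_eq_zero, Finset.sum_mul] at hti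
  simpa only [smul_eq_mul, Submonoid.coe_mul, mul_assoc] using hti

end OreLocalization

theorem low_iff_low_in_oreLocalization_general {R : Type*} [Ring R] (S : Submonoid R)
    (oreCond : ∀ (r : R) (s : S), ∃ (r' : R) (s' : S), r * (s' : R) = (s : R) * r')
    (Q : Type*) [Ring Q] (f : R →+* Q)
    (hunit : ∀ s : S, IsUnit (f s))
    (hfrac : ∀ q : Q, ∃ (r : R) (s : S), q * f s = f r)
    (hker : ∀ r : R, f r = 0 ↔ ∃ s : S, r * (s : R) = 0)
    (φ : PPFormula R) :
    letI : Module R Q := Module.compHom Q f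
    (φ.eval R = {0} → φ.eval Q = {0}) ∧
    ((∀ s : S, (∀ r : R, (s : R) * r = 0 → r = 0) ∧ (∀ r : R, r * (s : R) = 0 → r = 0)) →
      (φ.eval R = {0} ↔ φ.eval Q = {0})) := by
  let : Module R Q := Module.compHom Q f
  have low_of_low : φ.eval R = {0} → φ.eval Q = {0} := by
    simp only [PPFormula.eval_eq_singleton_zero_iff]
    intro hR x hx
    obtain ⟨c, s, hc⟩ := hfrac x
    obtain ⟨t, ht⟩ := exists_mul_mem_eval_of_map_mem_eval S f oreCond hfrac hker φ
      (hc ▸ φ.mul_mem_eval f (f s) hx)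
    have hc0 : f c = 0 :=
      (hunit t).mul_left_eq_zero.mp (by rw [← map_mul, hR _ ht, map_zero])
    exact (hunit s).mul_left_eq_zero.mp (hc.trans hc0)
  refine ⟨low_of_low, fun hreg => ⟨low_of_low, fun hQ => ?_⟩⟩
  rw [PPFormula.eval_eq_singleton_zero_iff] at hQ ⊢
  intro x hx
  obtain ⟨s, hs⟩ := (hker x).mp (hQ _ (φ.map_mem_eval f hx))
  exact (hreg s).2 x hs

/-- Let `S` be a right denominator set in `R` (a submonoid satisfying the right Ore
condition and right reversibility) and let `Q = RS⁻¹` be the right Ore localization,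
characterized by: images of elements of `S` are units, every element of `Q` is of the
form `f r * (f s)⁻¹`, and the kernel of `f : R → Q` is `{r | ∃ s ∈ S, r * s = 0}`.
View `Q` as a left `R`-module via `f`.  Then for any unary pp formula `φ`:
(1) if `φ(R) = 0` then `φ(Q) = 0`; (2) if moreover every element of `S` is regular,
then `φ(R) = 0 ↔ φ(Q) = 0`. -/
theorem low_iff_low_in_oreLocalization {R : Type*} [Ring R] (S : Submonoid R)
    (oreCond : ∀ (r : R) (s : S), ∃ (r' : R) (s' : S), r * (s' : R) = (s : R) * r')
    (reversible : ∀ (r : R) (s : S), (s : R) * r = 0 → ∃ s' : S, r * (s' : R) = 0)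
    (Q : Type*) [Ring Q] (f : R →+* Q)
    (hunit : ∀ s : S, IsUnit (f s))
    (hfrac : ∀ q : Q, ∃ (r : R) (s : S), q * f s = f r)
    (hker : ∀ r : R, f r = 0 ↔ ∃ s : S, r * (s : R) = 0)
    (φ : PPFormula R) :
    letI : Module R Q := Module.compHom Q f
    (φ.eval R = {0} → φ.eval Q = {0}) ∧
    ((∀ s : S, (∀ r : R, (s : R) * r = 0 → r = 0) ∧ (∀ r : R, r * (s : R) = 0 → r = 0)) →
      (φ.eval R = {0} ↔ φ.eval Q = {0})) :=
  low_iff_low_in_oreLocalization_general S oreCond Q f hunit hfrac hker φ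
end

section
/- Let S be a right denominator set in a ring R and let Q = RS⁻¹ be the right Ore localization of R at S. Then Q is flat as a left R-module (via the canonical map R → Q). -/
/-!
Clear denominators: a relation `∑ⱼ B i j • x j = 0` among finitely many fractions becomes, after
writing `x j * f d = f (r j)` with one common denominator `d ∈ S`, a family of elements
`∑ⱼ B i j * r j` of the kernel of `f`. These are right `S`-torsion, so one `t ∈ S` kills all of
them, and then `x j = (r j * t) • (f (d * t))⁻¹` is the required factorization through `R¹`.
-/

section OreCondition

variable {R : Type*} [Ring R] {S : Submonoid R}
  (oreCond : ∀ (r : R) (s : S), ∃ (r' : R) (s' : S), r * (s' : R) = (s : R) * r')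
include oreCond

theorem exists_common_annihilator {ι : Type*} (s : Finset ι) (c : ι → R)
    (htors : ∀ i ∈ s, ∃ u : S, c i * (u : R) = 0) :
    ∃ t : S, ∀ i ∈ s, c i * (t : R) = 0 := by
  classical
  induction s using Finset.induction_on with
  | empty => exact ⟨1, by simp⟩
  | insert a s _ ih =>
    obtain ⟨t, ht⟩ := ih fun i hi => htors i (Finset.mem_insert_of_mem hi)
    obtain ⟨u, hu⟩ := htors a (Finset.mem_insert_self a s)
    obtain ⟨r', s', hore⟩ := oreCond u t
    refine ⟨u * s', fun i hi => ?_⟩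
    rcases Finset.mem_insert.mp hi with rfl | hi
    · rw [Submonoid.coe_mul, ← mul_assoc, hu, zero_mul]
    · rw [Submonoid.coe_mul, hore, ← mul_assoc, ht i hi, zero_mul]

theorem exists_common_denominator_s11 {Q : Type*} [Ring Q] (f : R →+* Q)
    (hfrac : ∀ q : Q, ∃ (r : R) (s : S), q * f s = f r) {ι : Type*} (s : Finset ι)
    (x : ι → Q) : ∃ d : S, ∀ j ∈ s, ∃ r : R, x j * f d = f r := by
  classical
  induction s using Finset.induction_on with
  | empty => exact ⟨1, by simp⟩
  | insert a s _ ih =>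
    obtain ⟨d, hd⟩ := ih
    obtain ⟨r₀, s₀, hr₀⟩ := hfrac (x a)
    obtain ⟨r', s', hore⟩ := oreCond d s₀
    refine ⟨d * s', fun j hj => ?_⟩
    rcases Finset.mem_insert.mp hj with rfl | hj
    · exact ⟨r₀ * r', by rw [Submonoid.coe_mul, hore, map_mul, ← mul_assoc, hr₀, map_mul]⟩
    · obtain ⟨r, hr⟩ := hd j hj
      exact ⟨r * s', by rw [Submonoid.coe_mul, map_mul, ← mul_assoc, hr, map_mul]⟩

end OreCondition

theorem oreLocalization_flat_general {R : Type*} [Ring R] (S : Submonoid R)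
    (oreCond : ∀ (r : R) (s : S), ∃ (r' : R) (s' : S), r * (s' : R) = (s : R) * r')
    (Q : Type*) [Ring Q] (f : R →+* Q)
    (hunit : ∀ s : S, IsUnit (f s))
    (hfrac : ∀ q : Q, ∃ (r : R) (s : S), q * f s = f r)
    (hker : ∀ r : R, f r = 0 ↔ ∃ s : S, r * (s : R) = 0) :
    letI : Module R Q := Module.compHom Q f
    IsFlatModule R Q := by
  let _ : Module R Q := Module.compHom Q f
  have smul_def (a : R) (q : Q) : a • q = f a * q := rfl
  intro n k B x hBx
  obtain ⟨d, hd⟩ := exists_common_denominator_s11 oreCond f hfrac Finset.univ x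
  choose r hr using fun j => hd j (Finset.mem_univ j)
  have hkernel (i : Fin n) : f (∑ j, B i j * r j) = 0 :=
    calc f (∑ j, B i j * r j) = (∑ j, B i j • x j) * f d := by
          simp only [map_sum, map_mul, ← hr, Finset.sum_mul, smul_def, mul_assoc]
      _ = 0 := by rw [hBx i, zero_mul]
  obtain ⟨t, ht⟩ := exists_common_annihilator oreCond Finset.univ (fun i => ∑ j, B i j * r j)
    fun i _ => (hker _).mp (hkernel i)
  let u := (hunit (d * t)).unit
  refine ⟨1, fun j _ => r j * t, fun _ => ↑u⁻¹, fun j => ?_, fun i _ => ?_⟩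
  · rw [Fin.sum_univ_one, smul_def, Units.eq_mul_inv_iff_mul_eq, IsUnit.unit_spec,
      Submonoid.coe_mul, map_mul, map_mul, ← mul_assoc, hr]
  · simpa only [← mul_assoc, ← Finset.sum_mul] using ht i (Finset.mem_univ i)

/-- Let `S` be a right denominator set in `R` (a submonoid satisfying the right Ore
condition and right reversibility) and let `Q = RS⁻¹` be the right Ore localization,
characterized by: images of elements of `S` are units, every element of `Q` is of the
form `f r * (f s)⁻¹`, and the kernel of the canonical map `f : R → Q` is
`{r | ∃ s ∈ S, r * s = 0}`.  Then `Q` is flat as a left `R`-module via `f`. -/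
theorem oreLocalization_flat {R : Type*} [Ring R] (S : Submonoid R)
    (oreCond : ∀ (r : R) (s : S), ∃ (r' : R) (s' : S), r * (s' : R) = (s : R) * r')
    (reversible : ∀ (r : R) (s : S), (s : R) * r = 0 → ∃ s' : S, r * (s' : R) = 0)
    (Q : Type*) [Ring Q] (f : R →+* Q)
    (hunit : ∀ s : S, IsUnit (f s))
    (hfrac : ∀ q : Q, ∃ (r : R) (s : S), q * f s = f r)
    (hker : ∀ r : R, f r = 0 ↔ ∃ s : S, r * (s : R) = 0) :
    letI : Module R Q := Module.compHom Q f
    IsFlatModule R Q :=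
  oreLocalization_flat_general S oreCond Q f hunit hfrac hker
end

section
/- Let R be a domain satisfying both the left and the right Ore condition. Then every torsionfree divisible left R-module is flat. -/
section

open Matrix

variable {R M : Type*} [Ring R] [AddCommGroup M] [Module R M]

theorem sum_vecMul_smul {m n : Type*} [Fintype m] [Fintype n] (b : m → R) (a : Matrix m n R)
    (y : n → M) : ∑ p, (b ᵥ* a) p • y p = ∑ j, b j • ∑ p, a j p • y p := by
  simp only [vecMul, dotProduct, Finset.sum_smul, Finset.smul_sum, smul_smul]
  exact Finset.sum_comm

theorem IsFlatModule.of_forall_sum_smul_eq_zero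
    (h : ∀ (k : ℕ) (b : Fin k → R) (x : Fin k → M), ∑ j, b j • x j = 0 →
      ∃ (l : ℕ) (a : Matrix (Fin k) (Fin l) R) (y : Fin l → M),
        (∀ j, x j = ∑ p, a j p • y p) ∧ b ᵥ* a = 0) :
    IsFlatModule R M := by
  intro n
  induction n with
  | zero => exact fun k _ x _ => ⟨k, 1, x, fun j => by simp [one_apply, ite_smul], nofun⟩
  | succ n ih =>
    intro k B x hBx
    obtain ⟨l, a, y, hxy, hBa⟩ := h k (B 0) x (hBx 0)
    have hy : ∀ i : Fin n, ∑ q, (B i.succ ᵥ* a) q • y q = 0 := fun i => by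
      simpa only [sum_vecMul_smul, ← hxy] using hBx i.succ
    obtain ⟨l', a', y', hyy', hBa'⟩ := ih l (Matrix.of fun i => B i.succ ᵥ* a) y hy
    refine ⟨l', a * a', y', fun j => ?_, fun i p => ?_⟩
    · simp only [hxy j, hyy', mul_apply_eq_vecMul, sum_vecMul_smul]
    · change (B i ᵥ* (a * a')) p = 0
      rw [← vecMul_vecMul]
      refine Fin.cases ?_ (fun i => ?_) i
      · simp [hBa]
      · exact hBa' i p

theorem exists_right_ore_multipliers
    (rightOre : ∀ a b : R, a ≠ 0 → b ≠ 0 → ∃ u v : R, a * u = b * v ∧ a * u ≠ 0)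
    {a : R} (ha : a ≠ 0) (b : R) : ∃ u v : R, a * u = b * v ∧ v ≠ 0 := by
  by_cases hb : b = 0
  · exact ⟨0, a, by simp [hb], ha⟩
  obtain ⟨u, v, huv, hu⟩ := rightOre a b ha hb
  exact ⟨u, v, huv, by rintro rfl; exact hu (by rw [huv, mul_zero])⟩

theorem exists_matrix_factorization_of_sum_smul_eq_zero {ι : Type*} [Fintype ι] [DecidableEq ι]
    (rightOre : ∀ a b : R, a ≠ 0 → b ≠ 0 → ∃ u v : R, a * u = b * v ∧ a * u ≠ 0)
    (torsionfree : ∀ (r : R) (x : M), r ≠ 0 → r • x = 0 → x = 0)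
    (divisible : ∀ (r : R), r ≠ 0 → ∀ x : M, ∃ y : M, r • y = x)
    (b : ι → R) (x : ι → M) (hbx : ∑ j, b j • x j = 0) :
    ∃ (a : Matrix ι ι R) (y : ι → M), (∀ j, x j = ∑ p, a j p • y p) ∧ b ᵥ* a = 0 := by
  by_cases hb : b = 0
  · exact ⟨1, x, fun j => by simp [one_apply, ite_smul], by simp [hb]⟩
  obtain ⟨j₀, hj₀⟩ := Function.ne_iff.mp hb
  choose u t hut ht using fun p => exists_right_ore_multipliers rightOre hj₀ (b p)
  choose y hy using fun p => divisible (t p) (ht p) (x p)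
  have hz : ∑ p, u p • y p = 0 := by
    refine torsionfree (b j₀) _ hj₀ ?_
    calc b j₀ • ∑ p, u p • y p = ∑ p, (b p * t p) • y p := by
          simp only [Finset.smul_sum, smul_smul, hut]
      _ = 0 := by simpa only [mul_smul, hy] using hbx
  refine ⟨diagonal t - vecMulVec (Pi.single j₀ 1) u, y, fun j => ?_, ?_⟩
  · simp [sub_smul, Finset.sum_sub_distrib, diagonal_apply, ite_smul, vecMulVec_apply, mul_smul,
      ← Finset.smul_sum, hz, hy]
  · ext p
    simp [vecMul_sub, vecMul_diagonal, vecMul_vecMulVec, hut]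

end

theorem flat_of_torsionfree_divisible_of_twoSidedOreDomain_general (R : Type*) [Ring R]
    (rightOre : ∀ a b : R, a ≠ 0 → b ≠ 0 → ∃ u v : R, a * u = b * v ∧ a * u ≠ 0)
    (M : Type*) [AddCommGroup M] [Module R M]
    (torsionfree : ∀ (r : R) (x : M), r ≠ 0 → r • x = 0 → x = 0)
    (divisible : ∀ (r : R), r ≠ 0 → ∀ x : M, ∃ y : M, r • y = x) :
    IsFlatModule R M :=
  IsFlatModule.of_forall_sum_smul_eq_zero fun k b x hbx =>
    ⟨k, exists_matrix_factorization_of_sum_smul_eq_zero rightOre torsionfree divisible b x hbx⟩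

/-- Over a two-sided Ore domain, every torsionfree divisible left module is flat. -/
theorem flat_of_torsionfree_divisible_of_twoSidedOreDomain (R : Type*) [Ring R]
    [IsDomain R]
    (leftOre : ∀ a b : R, a ≠ 0 → b ≠ 0 → ∃ u v : R, u * a = v * b ∧ u * a ≠ 0)
    (rightOre : ∀ a b : R, a ≠ 0 → b ≠ 0 → ∃ u v : R, a * u = b * v ∧ a * u ≠ 0)
    (M : Type*) [AddCommGroup M] [Module R M]
    (torsionfree : ∀ (r : R) (x : M), r ≠ 0 → r • x = 0 → x = 0)
    (divisible : ∀ (r : R), r ≠ 0 → ∀ x : M, ∃ y : M, r • y = x) :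
    IsFlatModule R M :=
  flat_of_torsionfree_divisible_of_twoSidedOreDomain_general R rightOre M torsionfree divisible
end

section
/- Let R be a domain satisfying both the left and the right Ore condition and let M be a torsionfree left R-module. Set U = {x ∈ M | ∀ r ≠ 0 in R, ∃ y ∈ M, r • y = x}. Then U is an R-submodule of M, U is injective as an R-module, U contains every injective submodule of M, and there exists a submodule N of M with M the internal direct sum of U and N (IsCompl U N) such that the only element of N divisible in N by every nonzero r ∈ R is 0. -/
/-!
Over a right Ore domain the elements divisible by every nonzero scalar form a submodule: to
divide `s • x` by `r`, pick `r * u = s * v ≠ 0` and divide `x` by `v`. In a torsionfree module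
divisors are unique, so the divisors of an element of `U` again lie in `U`, i.e. `U` is
divisible. The left Ore condition then yields Baer's criterion for `U`: a map `I → U` is fixed by
its value on one nonzero `a ∈ I`, since every `b ∈ I` has a nonzero left multiple in `R * a`.
Conversely injective modules are divisible by regular elements, so injective submodules lie in
`U`; finally `U`, being injective, is a direct summand, and a complement of `U` meets `U` only
in `0`, which rules out nonzero divisible elements in it.
-/

section

open Module

variable {R M Q : Type*} [Ring R] [AddCommGroup M] [Module R M] [AddCommGroup Q] [Module R Q]

variable (R M) in
def ulmSubmodule
    (rightOre : ∀ a b : R, a ≠ 0 → b ≠ 0 → ∃ u v : R, a * u = b * v ∧ a * u ≠ 0) :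
    Submodule R M where
  carrier := {x : M | ∀ r : R, r ≠ 0 → ∃ y : M, r • y = x}
  zero_mem' r _ := ⟨0, smul_zero r⟩
  add_mem' {x x'} hx hx' r hr := by
    obtain ⟨y, rfl⟩ := hx r hr
    obtain ⟨y', rfl⟩ := hx' r hr
    exact ⟨y + y', smul_add r y y'⟩
  smul_mem' s x hx r hr := by
    rcases eq_or_ne s 0 with rfl | hs
    · exact ⟨0, by rw [smul_zero, zero_smul]⟩
    obtain ⟨u, v, huv, hne⟩ := rightOre r s hr hs
    have hv : v ≠ 0 := by
      rintro rfl
      exact hne (by rw [huv, mul_zero])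
    obtain ⟨z, rfl⟩ := hx v hv
    exact ⟨u • z, by rw [smul_smul, huv, mul_smul]⟩

theorem exists_mem_ulmSubmodule_smul_eq [IsDomain R] [IsTorsionFree R M]
    {rightOre : ∀ a b : R, a ≠ 0 → b ≠ 0 → ∃ u v : R, a * u = b * v ∧ a * u ≠ 0} {x : M} (hx : x ∈ ulmSubmodule R M rightOre) {r : R}
    (hr : r ≠ 0) : ∃ y ∈ ulmSubmodule R M rightOre, r • y = x := by
  obtain ⟨y, hy⟩ := hx r hr
  refine ⟨y, fun s hs => ?_, hy⟩
  obtain ⟨w, hw⟩ := hx (r * s) (mul_ne_zero hr hs)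
  refine ⟨w, smul_right_injective M hr ?_⟩
  simp only [smul_smul, hw, hy]

theorem Module.Baer.of_forall_exists_smul_eq [IsDomain R] [IsTorsionFree R Q]
    (leftOre : ∀ a b : R, a ≠ 0 → b ≠ 0 → ∃ u v : R, u * a = v * b ∧ u * a ≠ 0)
    (divisible : ∀ (x : Q) (r : R), r ≠ 0 → ∃ y, r • y = x) : Baer R Q := by
  intro I g
  rcases eq_or_ne I ⊥ with rfl | hI
  · refine ⟨0, fun x hx => ?_⟩
    obtain rfl : x = 0 := hx
    exact (map_zero g).symm
  obtain ⟨a, ha, ha0⟩ := I.ne_bot_iff.mp hI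
  obtain ⟨q, hq⟩ := divisible (g ⟨a, ha⟩) a ha0
  refine ⟨LinearMap.toSpanSingleton R Q q, fun b hb => ?_⟩
  rw [LinearMap.toSpanSingleton_apply]
  rcases eq_or_ne b 0 with rfl | hb0
  · rw [zero_smul]
    exact (map_zero g).symm
  obtain ⟨s, t, hst, hne⟩ := leftOre b a hb0 ha0
  have hs : s ≠ 0 := by
    rintro rfl
    exact hne (zero_mul b)
  have hsb : s • (⟨b, hb⟩ : I) = t • ⟨a, ha⟩ := Subtype.ext hst
  refine smul_right_injective Q hs ?_
  change s • b • q = s • g ⟨b, hb⟩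
  rw [smul_smul, hst, mul_smul, hq, ← map_smul, ← hsb, map_smul]

theorem Module.Baer.exists_smul_eq (h : Baer R Q) {r : R} (hr : IsRightRegular r) (x : Q) :
    ∃ y, r • y = x := by
  let e := LinearEquiv.ofInjective (LinearMap.toSpanSingleton R R r) hr
  obtain ⟨g, hg⟩ := h _ (LinearMap.toSpanSingleton R Q x ∘ₗ e.symm.toLinearMap)
  have hrI : r ∈ LinearMap.range (LinearMap.toSpanSingleton R R r) := ⟨1, one_smul R r⟩
  have he : e.symm ⟨r, hrI⟩ = 1 := by
    rw [LinearEquiv.symm_apply_eq]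
    exact Subtype.ext (one_smul R r).symm
  refine ⟨g 1, ?_⟩
  rw [← map_smul, smul_eq_mul, mul_one, hg r hrI]
  simp only [LinearMap.comp_apply, LinearEquiv.coe_coe, he, LinearMap.toSpanSingleton_apply,
    one_smul]

section

variable [IsDomain R] [IsTorsionFree R M]
  (rightOre : ∀ a b : R, a ≠ 0 → b ≠ 0 → ∃ u v : R, a * u = b * v ∧ a * u ≠ 0)

theorem injective_ulmSubmodule
    (leftOre : ∀ a b : R, a ≠ 0 → b ≠ 0 → ∃ u v : R, u * a = v * b ∧ u * a ≠ 0) :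
    Injective R (ulmSubmodule R M rightOre) := by
  refine (Baer.of_forall_exists_smul_eq leftOre fun x r hr => ?_).injective
  obtain ⟨y, hy, hyx⟩ := exists_mem_ulmSubmodule_smul_eq x.2 hr
  exact ⟨⟨y, hy⟩, Subtype.ext hyx⟩

theorem le_ulmSubmodule_of_injective (W : Submodule R M) [Injective R W] :
    W ≤ ulmSubmodule R M rightOre := by
  intro x hx r hr
  rcases eq_or_ne x 0 with rfl | hx0
  · exact ⟨0, smul_zero r⟩
  -- `Baer.of_injective` needs `R` to be small relative to `W`; the orbit map of `x` embeds it.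
  have : Small.{_, _} R := small_of_injective (smul_left_injective R hx0)
  obtain ⟨y, hy⟩ := (Baer.of_injective ‹Injective R W›).exists_smul_eq
    (IsRegular.of_ne_zero hr).right ⟨x, hx⟩
  exact ⟨y, congrArg Subtype.val hy⟩

end

theorem Submodule.exists_isCompl_of_injective (p : Submodule R M) [Injective R p] :
    ∃ q : Submodule R M, IsCompl p q := by
  obtain ⟨π, hπ⟩ := Injective.out p.subtype p.injective_subtype LinearMap.id
  exact ⟨LinearMap.ker π, LinearMap.isCompl_of_proj hπ⟩

end

/-- Let `R` be a two-sided Ore domain and `M` a torsionfree left `R`-module.  The set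
`U = {x | ∀ r ≠ 0, r • y = x for some y}` (the first Ulm submodule of `M`) is an
`R`-submodule, it is injective, it contains every injective submodule of `M`, and it
has a complement `N` (so `M = U ⊕ N` internally) in which `0` is the only element
divisible in `N` by every nonzero scalar (i.e. `N` is reduced). -/
theorem ulm_submodule_of_torsionfree_twoSidedOreDomain (R : Type*) [Ring R] [IsDomain R]
    (leftOre : ∀ a b : R, a ≠ 0 → b ≠ 0 → ∃ u v : R, u * a = v * b ∧ u * a ≠ 0)
    (rightOre : ∀ a b : R, a ≠ 0 → b ≠ 0 → ∃ u v : R, a * u = b * v ∧ a * u ≠ 0)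
    (M : Type*) [AddCommGroup M] [Module R M]
    (torsionfree : ∀ (r : R) (x : M), r ≠ 0 → r • x = 0 → x = 0) :
    ∃ U : Submodule R M,
      (U : Set M) = {x : M | ∀ r : R, r ≠ 0 → ∃ y : M, r • y = x} ∧
      Module.Injective R U ∧
      (∀ W : Submodule R M, Module.Injective R W → W ≤ U) ∧
      ∃ N : Submodule R M, IsCompl U N ∧
        ∀ x ∈ N, (∀ r : R, r ≠ 0 → ∃ y ∈ N, r • y = x) → x = 0 := by
  have : Module.IsTorsionFree R M :=
    .of_smul_eq_zero fun r x h => or_iff_not_imp_left.2 fun hr => torsionfree r x hr h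
  have hU := injective_ulmSubmodule (M := M) rightOre leftOre
  obtain ⟨N, hN⟩ := (ulmSubmodule R M rightOre).exists_isCompl_of_injective
  refine ⟨ulmSubmodule R M rightOre, rfl, hU, fun W _ => le_ulmSubmodule_of_injective rightOre W,
    N, hN, fun x hxN hdiv => Submodule.disjoint_def.mp hN.disjoint x (fun r hr => ?_) hxN⟩
  obtain ⟨y, -, hy⟩ := hdiv r hr
  exact ⟨y, hy⟩
end

section
/- Let R be a domain satisfying both the left and the right Ore condition, and let M be a divisible left R-module. Suppose M has a maximal pp subgroup, i.e., there is a unary pp formula φ with φ(M) ≠ M such that for every unary pp formula ψ with φ(M) ⊆ ψ(M) one has ψ(M) = φ(M) or ψ(M) = M. Then M is pp-simple (every pp subgroup of M equals 0 or M) and torsionfree. -/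
open Matrix

section OreElimination

variable {R : Type*} [Ring R]

theorem exists_ne_zero_mul_eq_mul_of_leftOre [Nontrivial R]
    (leftOre : ∀ a b : R, a ≠ 0 → b ≠ 0 → ∃ u v : R, u * a = v * b ∧ u * a ≠ 0)
    (a : R) {b : R} (hb : b ≠ 0) : ∃ u v : R, u ≠ 0 ∧ u * a = v * b := by
  by_cases ha : a = 0
  · exact ⟨1, 0, one_ne_zero, by simp [ha]⟩
  · obtain ⟨u, v, huv, hne⟩ := leftOre a b ha hb
    exact ⟨u, v, left_ne_zero_of_mul hne, huv⟩

theorem exists_ne_zero_mul_eq_mul_of_rightOre [Nontrivial R]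
    (rightOre : ∀ a b : R, a ≠ 0 → b ≠ 0 → ∃ u v : R, a * u = b * v ∧ a * u ≠ 0)
    {a : R} (ha : a ≠ 0) (w : R) : ∃ p q : R, q ≠ 0 ∧ a * p = w * q := by
  by_cases hw : w = 0
  · exact ⟨0, 1, one_ne_zero, by simp [hw]⟩
  · obtain ⟨p, q, hpq, hne⟩ := rightOre a w ha hw
    exact ⟨p, q, right_ne_zero_of_mul (hpq ▸ hne), hpq⟩

variable {m n : ℕ}

theorem vecMul_eq_zero_iff_col_and_tail (l : Fin n → R) (A : Matrix (Fin n) (Fin (m + 1)) R) :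
    l ᵥ* A = 0 ↔ l ⬝ᵥ (fun i => A i 0) = 0 ∧ l ᵥ* Matrix.of (fun i => Fin.tail (A i)) = 0 := by
  rw [funext_iff, Fin.forall_fin_succ, funext_iff]
  rfl

theorem mulVec_cons_eq_col_add_tail (A : Matrix (Fin n) (Fin (m + 1)) R) (p : R) (c : Fin m → R) :
    A *ᵥ Fin.cons p c = fun i => A i 0 * p + (Matrix.of (fun i => Fin.tail (A i)) *ᵥ c) i :=
  funext fun i => dotProduct_cons (A i) p c

def pivotElim (u v : Fin n → R) (i₀ : Fin n) : Matrix (Fin n) (Fin n) R :=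
  diagonal u - Matrix.of fun i k => if k = i₀ then v i else 0

theorem pivotElim_mulVec (u v : Fin n → R) (i₀ : Fin n) (x : Fin n → R) :
    pivotElim u v i₀ *ᵥ x = fun i => u i * x i - v i * x i₀ := by
  ext i
  simp only [pivotElim, sub_mulVec, Pi.sub_apply, mulVec_diagonal]
  simp [mulVec, dotProduct]

variable [IsDomain R]

theorem exists_solution_of_pivotElim
    (rightOre : ∀ a b : R, a ≠ 0 → b ≠ 0 → ∃ u v : R, a * u = b * v ∧ a * u ≠ 0)
    {a : Fin n → R} {T : Matrix (Fin n) (Fin m) R} {b : Fin n → R} {i₀ : Fin n} (ha : a i₀ ≠ 0)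
    {u v : Fin n → R} (hu : ∀ i, u i ≠ 0) (huv : ∀ i, u i * a i = v i * a i₀)
    {s : R} (hs : s ≠ 0) {c : Fin m → R}
    (hc : (pivotElim u v i₀ * T) *ᵥ c = fun i => (pivotElim u v i₀ *ᵥ b) i * s) :
    ∃ s' ≠ 0, ∃ p c', ∀ i, a i * p + (T *ᵥ c') i = b i * s' := by
  set d : Fin n → R := fun i => (T *ᵥ c) i - b i * s
  have hd : ∀ i, u i * d i = v i * d i₀ := by
    intro i
    have h := congrFun hc i
    rw [← mulVec_mulVec, pivotElim_mulVec, pivotElim_mulVec] at h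
    rw [mul_sub, mul_sub, sub_eq_sub_iff_sub_eq_sub, ← mul_assoc, ← mul_assoc, ← sub_mul]
    exact h
  -- The residual `d i₀` of the pivot row is absorbed by scaling `c` on the right by `q`.
  obtain ⟨p, q, hq, hpq⟩ := exists_ne_zero_mul_eq_mul_of_rightOre rightOre ha (-d i₀)
  refine ⟨s * q, mul_ne_zero hs hq, p, fun j => c j * q, fun i => ?_⟩
  have hTq : (T *ᵥ fun j => c j * q) i = (T *ᵥ c) i * q := by
    simp [mulVec, dotProduct, Finset.sum_mul, mul_assoc]
  have key : u i * (a i * p + d i * q) = 0 :=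
    calc u i * (a i * p + d i * q) = v i * (a i₀ * p + d i₀ * q) := by
          rw [mul_add, mul_add, ← mul_assoc, huv i, ← mul_assoc, hd i, mul_assoc, mul_assoc]
      _ = 0 := by rw [hpq, neg_mul, neg_add_cancel, mul_zero]
  have h := (mul_eq_zero.1 key).resolve_left (hu i)
  simp only [d, sub_mul, mul_assoc] at h
  rw [hTq, ← sub_eq_zero, ← h]
  abel

theorem exists_mulVec_eq_or_exists_vecMul_eq_zero
    (leftOre : ∀ a b : R, a ≠ 0 → b ≠ 0 → ∃ u v : R, u * a = v * b ∧ u * a ≠ 0)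
    (rightOre : ∀ a b : R, a ≠ 0 → b ≠ 0 → ∃ u v : R, a * u = b * v ∧ a * u ≠ 0)
    (A : Matrix (Fin n) (Fin m) R) (b : Fin n → R) :
    (∃ s ≠ 0, ∃ c, A *ᵥ c = fun i => b i * s) ∨ ∃ l, l ᵥ* A = 0 ∧ l ⬝ᵥ b ≠ 0 := by
  induction m generalizing n with
  | zero =>
    by_cases hb : b = 0
    · exact Or.inl ⟨1, one_ne_zero, 0, by ext i; simp [hb]⟩
    · obtain ⟨i₀, hi₀⟩ := Function.ne_iff.1 hb
      exact Or.inr ⟨Pi.single i₀ 1, Subsingleton.elim _ _, by rwa [single_dotProduct, one_mul]⟩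
  | succ m ih =>
    set T : Matrix (Fin n) (Fin m) R := Matrix.of fun i => Fin.tail (A i)
    by_cases hcol : ∀ i, A i 0 = 0
    · rcases ih T b with ⟨s, hs, c, hc⟩ | ⟨l, hl, hlb⟩
      · exact Or.inl ⟨s, hs, Fin.cons 0 c, by simp [mulVec_cons_eq_col_add_tail, hcol, ← hc, T]⟩
      · refine Or.inr ⟨l, (vecMul_eq_zero_iff_col_and_tail l A).2 ⟨?_, hl⟩, hlb⟩
        simp [dotProduct, hcol]
    · obtain ⟨i₀, hi₀⟩ := not_forall.1 hcol
      choose u v hu huv using fun i => exists_ne_zero_mul_eq_mul_of_leftOre leftOre (A i 0) hi₀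
      set E := pivotElim u v i₀
      rcases ih (E * T) (E *ᵥ b) with ⟨s, hs, c, hc⟩ | ⟨l, hl, hlb⟩
      · obtain ⟨s', hs', p, c', h⟩ :=
          exists_solution_of_pivotElim rightOre (a := fun i => A i 0) hi₀ hu huv hs hc
        exact Or.inl ⟨s', hs', Fin.cons p c', by rw [mulVec_cons_eq_col_add_tail]; exact funext h⟩
      · have hEa : E *ᵥ (fun i => A i 0) = 0 := by
          rw [pivotElim_mulVec]
          ext i
          simp [huv i]
        refine Or.inr ⟨l ᵥ* E, (vecMul_eq_zero_iff_col_and_tail _ A).2 ⟨?_, ?_⟩, ?_⟩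
        · rw [← dotProduct_mulVec, hEa, dotProduct_zero]
        · rw [vecMul_vecMul]
          exact hl
        · rwa [← dotProduct_mulVec]

end OreElimination

namespace PPFormula

variable {R : Type*} [Ring R] {M : Type*} [AddCommGroup M] [Module R M]

theorem zero_mem_eval_s19 (ψ : PPFormula R) : (0 : M) ∈ ψ.eval M :=
  ⟨0, fun i => by simp⟩

theorem smul_eq_zero_of_vecMul_eq_zero (ψ : PPFormula R) {l : Fin ψ.n → R} (hl : l ᵥ* ψ.A = 0)
    {x : M} (hx : x ∈ ψ.eval M) : (l ⬝ᵥ ψ.b) • x = 0 := by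
  obtain ⟨y, hy⟩ := hx
  calc (l ⬝ᵥ ψ.b) • x = ∑ i, l i • ψ.b i • x := by
        simp only [dotProduct, Finset.sum_smul, mul_smul]
    _ = ∑ i, l i • ∑ j, ψ.A i j • y j := by simp only [hy]
    _ = ∑ j, (l ᵥ* ψ.A) j • y j := by
        simp only [vecMul, dotProduct, Finset.smul_sum, Finset.sum_smul, mul_smul]
        exact Finset.sum_comm
    _ = 0 := by simp [hl]

theorem smul_mem_eval (ψ : PPFormula R) {s : R} {c : Fin ψ.m → R}
    (hc : ψ.A *ᵥ c = fun i => ψ.b i * s) (x : M) : s • x ∈ ψ.eval M := by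
  refine ⟨fun j => c j • x, fun i => ?_⟩
  simp only [← mul_smul, ← Finset.sum_smul]
  exact congrArg (· • x) (congrFun hc i)

def annihilator (t : R) : PPFormula R :=
  ⟨1, 0, 0, fun _ => t⟩

theorem mem_eval_annihilator {t : R} {x : M} : x ∈ (annihilator t).eval M ↔ t • x = 0 := by
  simp [eval, annihilator, eq_comm]

theorem eval_eq_univ_or_exists_smul_eq_zero [IsDomain R]
    (leftOre : ∀ a b : R, a ≠ 0 → b ≠ 0 → ∃ u v : R, u * a = v * b ∧ u * a ≠ 0)
    (rightOre : ∀ a b : R, a ≠ 0 → b ≠ 0 → ∃ u v : R, a * u = b * v ∧ a * u ≠ 0)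
    (divisible : ∀ (r : R), r ≠ 0 → ∀ x : M, ∃ y : M, r • y = x) (ψ : PPFormula R) :
    ψ.eval M = Set.univ ∨ ∃ r : R, r ≠ 0 ∧ ∀ x ∈ ψ.eval M, r • x = 0 := by
  rcases exists_mulVec_eq_or_exists_vecMul_eq_zero leftOre rightOre ψ.A ψ.b with
    ⟨s, hs, c, hc⟩ | ⟨l, hl, hlb⟩
  · refine Or.inl (Set.eq_univ_of_forall fun x => ?_)
    obtain ⟨y, rfl⟩ := divisible s hs x
    exact ψ.smul_mem_eval hc y
  · exact Or.inr ⟨l ⬝ᵥ ψ.b, hlb, fun _ => ψ.smul_eq_zero_of_vecMul_eq_zero hl⟩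

end PPFormula

open PPFormula in
/-- Let `M` be a divisible module over a two-sided Ore domain.  If `M` has a maximal
(proper) pp subgroup, then `M` is pp-simple (every pp subgroup is `0` or `M`) and
torsionfree. -/
theorem ppSimple_torsionfree_of_divisible_with_maximal_ppSubgroup (R : Type*) [Ring R]
    [IsDomain R]
    (leftOre : ∀ a b : R, a ≠ 0 → b ≠ 0 → ∃ u v : R, u * a = v * b ∧ u * a ≠ 0)
    (rightOre : ∀ a b : R, a ≠ 0 → b ≠ 0 → ∃ u v : R, a * u = b * v ∧ a * u ≠ 0)
    (M : Type*) [AddCommGroup M] [Module R M]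
    (divisible : ∀ (r : R), r ≠ 0 → ∀ x : M, ∃ y : M, r • y = x)
    (φ : PPFormula R) (hproper : φ.eval M ≠ Set.univ)
    (hmax : ∀ ψ : PPFormula R, φ.eval M ⊆ ψ.eval M →
      ψ.eval M = φ.eval M ∨ ψ.eval M = Set.univ) :
    (∀ ψ : PPFormula R, ψ.eval M = ({0} : Set M) ∨ ψ.eval M = Set.univ) ∧
    (∀ (r : R) (x : M), r ≠ 0 → r • x = 0 → x = 0) := by
  obtain ⟨r₀, hr₀, hφ⟩ :=
    (eval_eq_univ_or_exists_smul_eq_zero leftOre rightOre divisible φ).resolve_left hproper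
  have torsionfree : ∀ (r : R) (x : M), r ≠ 0 → r • x = 0 → x = 0 := by
    intro r x hr hrx
    obtain ⟨y, rfl⟩ := divisible r₀ hr₀ x
    have hsub : φ.eval M ⊆ (annihilator (r * r₀)).eval M := fun z hz => by
      rw [mem_eval_annihilator, mul_smul, hφ z hz, smul_zero]
    rcases hmax _ hsub with heq | huniv
    · exact hφ y (heq ▸ mem_eval_annihilator.2 (by rw [mul_smul, hrx]))
    · refine absurd (Set.eq_univ_of_forall fun z => ?_) hproper
      obtain ⟨w, rfl⟩ := divisible (r * r₀) (mul_ne_zero hr hr₀) z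
      rw [mem_eval_annihilator.1 (huniv ▸ Set.mem_univ w)]
      exact φ.zero_mem_eval_s19
  refine ⟨fun ψ => ?_, torsionfree⟩
  rcases eval_eq_univ_or_exists_smul_eq_zero leftOre rightOre divisible ψ with h | ⟨r, hr, hψ⟩
  · exact Or.inr h
  · exact Or.inl (Set.eq_singleton_iff_unique_mem.2
      ⟨ψ.zero_mem_eval_s19, fun x hx => torsionfree r x hr (hψ x hx)⟩)
end
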